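/- Inversion of a terminating very-well-poised series. Let n ∈ ℕ, r ∈ ℕ with r ≥ 4, q, z, b, a₅,…,a_{r+1} ∈ ℂ all nonzero with |q| ≠ 1, with a fixed square root √b chosen, and assume every q-Pochhammer symbol appearing in a denominator below is nonzero. Then ₍r+1₎W_r(b; q^{-n}, a₅,…,a_{r+1}; q, z) = q^{−n(n−1)/2} (−z/q)^n · (q√b, −q√b, b, a₅,…,a_{r+1}; q)_n / (√b, −√b, q^{n+1}b, qb/a₅, …, qb/a_{r+1}; q)_n · ₍r+1₎W_r(q^{−2n}/b; q^{-n}, q^{-n}a₅/b, …, q^{-n}a_{r+1}/b; q, q^{2n+r−3} b^{r−3} / ((a₅⋯a_{r+1})² z)). -/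

import Mathlib

/-!
Reversing the order of summation `k ↦ n - k` in a terminating `₍r+1₎φ_r` gives, up to its
last term, another terminating series, with numerator parameters `q^{1-n}/b_j`, denominator
parameters `q^{1-n}/a_j` and argument `∏ b_j / (∏ a_j · z)`: the term ratios of the two series
at `k` and `n - 1 - k` multiply to `1`, because `1 - a q^k = -a q^k (1 - (q^{1-n}/a) q^{n-1-k})`.
For a very-well-poised series the reflected parameters are again very-well-poised, with `b`
replaced by `q^{-2n}/b`; the pairs `±q√b` and `±√b` need only be matched up to their squares,
since `(x;q)_k (-x;q)_k` depends only on `x²`.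
-/

open Finset

/-- The `q`-Pochhammer symbol `(a;q)_n := ∏_{j=0}^{n-1} (1 - a q^j)`. -/
noncomputable def qPoch (a q : ℂ) (n : ℕ) : ℂ :=
  ∏ j ∈ Finset.range n, (1 - a * q ^ j)

/-- The terminating basic hypergeometric series
`₍r+1₎φ_r(q^{-n}, as; bs; q, z)`. -/
noncomputable def phi (n : ℕ) (as bs : List ℂ) (q z : ℂ) : ℂ :=
  ∑ k ∈ Finset.range (n + 1),
    ((q ^ (-(n : ℤ)) :: as).map fun a => qPoch a q k).prod /
      ((q :: bs).map fun b => qPoch b q k).prod * z ^ k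

theorem Finset.sum_range_eq_mul_sum_of_ratio {R : Type*} [CommSemiring R] {t s ρ σ : ℕ → R}
    {n : ℕ} (ht : ∀ k < n, t (k + 1) = t k * ρ k) (hs : ∀ j < n, s (j + 1) = s j * σ j)
    (hs0 : s 0 = 1) (hρσ : ∀ j k, j + k + 1 = n → ρ k * σ j = 1) :
    ∑ k ∈ range (n + 1), t k = t n * ∑ j ∈ range (n + 1), s j := by
  have key : ∀ j ≤ n, t (n - j) = t n * s j := by
    intro j
    induction j with
    | zero => simp [hs0]
    | succ j ih =>
      intro hj
      obtain ⟨k, rfl⟩ : ∃ k, n = j + k + 1 := ⟨n - (j + 1), by omega⟩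
      have hk : j + k + 1 - (j + 1) = k := by omega
      calc t (j + k + 1 - (j + 1)) = t k * (ρ k * σ j) := by rw [hρσ j k rfl, mul_one, hk]
        _ = t (j + k + 1 - j) * σ j := by
          rw [← mul_assoc, ← ht k (by omega)]; congr 2; omega
        _ = t (j + k + 1) * s (j + 1) := by rw [ih (by omega), hs j (by omega), mul_assoc]
  rw [mul_sum, ← sum_range_reflect]
  exact sum_congr rfl fun j hj => by
    rw [show n + 1 - 1 - j = n - j by omega, key j (by simpa [Nat.lt_succ_iff] using hj)]

theorem qPoch_succ (a q : ℂ) (k : ℕ) : qPoch a q (k + 1) = qPoch a q k * (1 - a * q ^ k) :=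
  prod_range_succ _ k

theorem one_sub_mul_pow_ne_zero_of_qPoch_ne_zero {a q : ℂ} {k n : ℕ} (hk : k < n)
    (h : qPoch a q n ≠ 0) : 1 - a * q ^ k ≠ 0 :=
  prod_ne_zero_iff.1 h k (mem_range.2 hk)

theorem qPoch_mul_qPoch_neg_of_sq_eq {x y : ℂ} (q : ℂ) (k : ℕ) (h : x ^ 2 = y ^ 2) :
    qPoch x q k * qPoch (-x) q k = qPoch y q k * qPoch (-y) q k := by
  simp only [qPoch, ← prod_mul_distrib]
  refine prod_congr rfl fun j _ => ?_
  linear_combination (-(q ^ j) ^ 2) * h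

theorem qPoch_inv_pow_self_mul_pow {q : ℂ} (hq : q ≠ 0) :
    ∀ n : ℕ, qPoch (q ^ n)⁻¹ q n * q ^ (n.choose 2 + n) = (-1) ^ n * qPoch q q n
  | 0 => by simp [qPoch]
  | n + 1 => by
    have hshift :
        qPoch (q ^ (n + 1))⁻¹ q (n + 1) = qPoch (q ^ n)⁻¹ q n * (1 - (q ^ (n + 1))⁻¹) := by
      rw [qPoch, prod_range_succ', qPoch]
      congr 1
      · exact prod_congr rfl fun j _ => by field_simp; ring
      · simp
    have hflip : (1 - (q ^ (n + 1))⁻¹) * q ^ (n + 1) = q ^ (n + 1) - 1 := by field_simp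
    rw [hshift, qPoch_succ, Nat.choose_succ_succ', Nat.choose_one_right]
    linear_combination (1 - (q ^ (n + 1))⁻¹) * q ^ (n + 1) * qPoch_inv_pow_self_mul_pow hq n +
      (-1) ^ n * qPoch q q n * hflip

-- `a ↦ q^{1-n}/a`: reversing a terminating sum with `n + 1` terms reflects every parameter so.
noncomputable def qReflect (q : ℂ) (n : ℕ) (a : ℂ) : ℂ := q / (q ^ n * a)

theorem one_sub_mul_pow_eq_of_add_add_one_eq {q a : ℂ} {n j k : ℕ} (hq : q ≠ 0) (ha : a ≠ 0)
    (hjk : j + k + 1 = n) :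
    1 - a * q ^ k = -(a * q ^ k) * (1 - qReflect q n a * q ^ j) := by
  have h : a * q ^ k * (qReflect q n a * q ^ j) = 1 := by
    rw [qReflect, ← hjk]
    field_simp
    ring
  linear_combination -h

theorem List.prod_map_one_sub_mul_pow_eq {q : ℂ} {n j k : ℕ} (hq : q ≠ 0)
    (hjk : j + k + 1 = n) (l : List ℂ) (hl : ∀ a ∈ l, a ≠ 0) :
    (l.map fun a => 1 - a * q ^ k).prod = (-q ^ k) ^ l.length * l.prod *
      ((l.map (qReflect q n)).map fun c => 1 - c * q ^ j).prod := by
  induction l with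
  | nil => simp
  | cons a l ih =>
    simp only [List.forall_mem_cons] at hl
    simp only [List.map_cons, List.prod_cons, List.length_cons, ih hl.2,
      one_sub_mul_pow_eq_of_add_add_one_eq hq hl.1 hjk]
    ring

noncomputable def phiTerm (AS BS : List ℂ) (q z : ℂ) (k : ℕ) : ℂ :=
  (AS.map fun a => qPoch a q k).prod / (BS.map fun b => qPoch b q k).prod * z ^ k

noncomputable def phiTermRatio (AS BS : List ℂ) (q z : ℂ) (k : ℕ) : ℂ :=
  z * (AS.map fun a => 1 - a * q ^ k).prod / (BS.map fun b => 1 - b * q ^ k).prod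

theorem phiTerm_zero (AS BS : List ℂ) (q z : ℂ) : phiTerm AS BS q z 0 = 1 := by
  simp [phiTerm, qPoch]

theorem phiTerm_succ (AS BS : List ℂ) (q z : ℂ) (k : ℕ) :
    phiTerm AS BS q z (k + 1) = phiTerm AS BS q z k * phiTermRatio AS BS q z k := by
  simp only [phiTerm, phiTermRatio, qPoch_succ, List.prod_map_mul, pow_succ]
  ring

theorem phiTermRatio_mul_phiTermRatio_qReflect {q z : ℂ} {n j k : ℕ} {AS BS : List ℂ}
    (hq : q ≠ 0) (hz : z ≠ 0) (hjk : j + k + 1 = n) (hlen : AS.length = BS.length)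
    (hAS : ∀ a ∈ AS, a ≠ 0) (hBS : ∀ b ∈ BS, b ≠ 0)
    (hdenL : (BS.map fun b => 1 - b * q ^ k).prod ≠ 0)
    (hdenR : ((AS.map (qReflect q n)).map fun c => 1 - c * q ^ j).prod ≠ 0) :
    phiTermRatio AS BS q z k *
      phiTermRatio (BS.map (qReflect q n)) (AS.map (qReflect q n)) q (BS.prod / AS.prod / z) j
      = 1 := by
  have hA : AS.prod ≠ 0 := List.prod_ne_zero fun h => hAS 0 h rfl
  have hB : BS.prod ≠ 0 := List.prod_ne_zero fun h => hBS 0 h rfl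
  have hqk : (-q ^ k) ^ BS.length ≠ 0 := pow_ne_zero _ (neg_ne_zero.2 (pow_ne_zero _ hq))
  rw [List.prod_map_one_sub_mul_pow_eq hq hjk BS hBS] at hdenL
  have hdenL' := right_ne_zero_of_mul hdenL
  simp only [phiTermRatio]
  rw [List.prod_map_one_sub_mul_pow_eq hq hjk AS hAS,
    List.prod_map_one_sub_mul_pow_eq hq hjk BS hBS, hlen]
  generalize ((AS.map (qReflect q n)).map fun c => 1 - c * q ^ j).prod = DA at *
  generalize ((BS.map (qReflect q n)).map fun c => 1 - c * q ^ j).prod = DB at *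
  field_simp

theorem sum_phiTerm_eq_mul_sum_phiTerm_qReflect {q z : ℂ} {n : ℕ} {AS BS : List ℂ}
    (hq : q ≠ 0) (hz : z ≠ 0) (hlen : AS.length = BS.length)
    (hAS : ∀ a ∈ AS, a ≠ 0) (hBS : ∀ b ∈ BS, b ≠ 0)
    (hdenL : ∀ b ∈ BS, qPoch b q n ≠ 0)
    (hdenR : ∀ a ∈ AS, qPoch (qReflect q n a) q n ≠ 0) :
    ∑ k ∈ range (n + 1), phiTerm AS BS q z k
      = phiTerm AS BS q z n * ∑ j ∈ range (n + 1),
          phiTerm (BS.map (qReflect q n)) (AS.map (qReflect q n)) q (BS.prod / AS.prod / z) j := by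
  refine sum_range_eq_mul_sum_of_ratio (fun k _ => phiTerm_succ ..) (fun j _ => phiTerm_succ ..)
    (phiTerm_zero ..) fun j k hjk => phiTermRatio_mul_phiTermRatio_qReflect hq hz hjk hlen hAS hBS
      (List.prod_ne_zero ?_) (List.prod_ne_zero ?_)
  · simp only [List.mem_map, not_exists, not_and]
    exact fun b hb => one_sub_mul_pow_ne_zero_of_qPoch_ne_zero (k := k) (by omega) (hdenL b hb)
  · simp only [List.map_map, List.mem_map, not_exists, not_and, Function.comp]
    exact fun a ha => one_sub_mul_pow_ne_zero_of_qPoch_ne_zero (k := j) (by omega) (hdenR a ha)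

theorem qReflect_self {q : ℂ} (hq : q ≠ 0) (n : ℕ) : qReflect q n q = q ^ (-(n : ℤ)) := by
  rw [qReflect, zpow_neg, zpow_natCast]
  field_simp

theorem qReflect_zpow_neg {q : ℂ} (hq : q ≠ 0) (n : ℕ) :
    qReflect q n (q ^ (-(n : ℤ))) = q := by
  rw [qReflect, zpow_neg, zpow_natCast]
  field_simp

theorem phi_eq_mul_phi_qReflect {q z : ℂ} {n : ℕ} {as bs : List ℂ} (hq : q ≠ 0)
    (hz : z ≠ 0) (hlen : as.length = bs.length) (has : ∀ a ∈ as, a ≠ 0)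
    (hbs : ∀ b ∈ bs, b ≠ 0) (hdenL : ∀ b ∈ q :: bs, qPoch b q n ≠ 0)
    (hdenR : ∀ a ∈ as, qPoch (qReflect q n a) q n ≠ 0) :
    phi n as bs q z = phiTerm (q ^ (-(n : ℤ)) :: as) (q :: bs) q z n *
      phi n (bs.map (qReflect q n)) (as.map (qReflect q n)) q
        (q ^ (n + 1) * bs.prod / as.prod / z) := by
  have hz' : (q :: bs).prod / (q ^ (-(n : ℤ)) :: as).prod / z
      = q ^ (n + 1) * bs.prod / as.prod / z := by
    rw [List.prod_cons, List.prod_cons, zpow_neg, zpow_natCast, pow_succ]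
    field_simp
  have key := sum_phiTerm_eq_mul_sum_phiTerm_qReflect (n := n) (z := z) hq hz
    (AS := q ^ (-(n : ℤ)) :: as) (BS := q :: bs) (by simp [hlen])
    (by simpa [hq] using has) (by simpa [hq] using hbs) hdenL
    (List.forall_mem_cons.2 ⟨by rw [qReflect_zpow_neg hq]; exact hdenL q (by simp), hdenR⟩)
  rwa [List.map_cons, List.map_cons, qReflect_self hq, qReflect_zpow_neg hq, hz'] at key

theorem phiTerm_top {q : ℂ} (hq : q ≠ 0) {n : ℕ} (hqq : qPoch q q n ≠ 0) (as bs : List ℂ)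
    (z : ℂ) :
    phiTerm (q ^ (-(n : ℤ)) :: as) (q :: bs) q z n
      = q ^ (-(n.choose 2 : ℤ)) * (-z / q) ^ n *
          ((as.map fun a => qPoch a q n).prod / (bs.map fun b => qPoch b q n).prod) := by
  have h := qPoch_inv_pow_self_mul_pow hq n
  rw [← eq_div_iff (pow_ne_zero _ hq)] at h
  rw [phiTerm, List.map_cons, List.map_cons, List.prod_cons, List.prod_cons, zpow_neg,
    zpow_natCast, zpow_neg, zpow_natCast, h, div_pow, neg_pow]
  field_simp
  ring

theorem phi_congr {n : ℕ} {as as' bs bs' : List ℂ} {q z z' : ℂ}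
    (has : ∀ k, (as.map fun a => qPoch a q k).prod = (as'.map fun a => qPoch a q k).prod)
    (hbs : ∀ k, (bs.map fun b => qPoch b q k).prod = (bs'.map fun b => qPoch b q k).prod)
    (hz : z = z') : phi n as bs q z = phi n as' bs' q z' := by
  simp only [phi, List.map_cons, List.prod_cons, has, hbs, hz]

theorem qReflect_neg (q : ℂ) (n : ℕ) (x : ℂ) : qReflect q n (-x) = -qReflect q n x := by
  simp only [qReflect, mul_neg, div_neg]

theorem zpow_neg_two_mul_natCast (q : ℂ) (n : ℕ) :
    q ^ (-2 * (n : ℤ)) = ((q ^ n) ^ 2)⁻¹ := by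
  rw [← zpow_natCast, ← zpow_natCast, ← zpow_mul, ← zpow_neg]
  ring_nf

def vwpNum (q b sb : ℂ) {m : ℕ} (a : Fin m → ℂ) : List ℂ :=
  [b, q * sb, -(q * sb)] ++ List.ofFn a

noncomputable def vwpDen (n : ℕ) (q b sb : ℂ) {m : ℕ} (a : Fin m → ℂ) : List ℂ :=
  [sb, -sb, q ^ (n + 1) * b] ++ List.ofFn fun i => q * b / a i

section VeryWellPoised

variable {n m : ℕ} {q b sb sb' : ℂ} {a : Fin m → ℂ}

theorem prod_map_qPoch_map_qReflect_vwpDen (hq : q ≠ 0) (hb : b ≠ 0) (ha : ∀ i, a i ≠ 0)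
    (hsb : sb ^ 2 = b) (hsb' : sb' ^ 2 = q ^ (-2 * (n : ℤ)) / b) (k : ℕ) :
    (((vwpDen n q b sb a).map (qReflect q n)).map fun x => qPoch x q k).prod
      = ((vwpNum q (q ^ (-2 * (n : ℤ)) / b) sb' fun i => q ^ (-(n : ℤ)) * a i / b).map
          fun x => qPoch x q k).prod := by
  rw [zpow_neg_two_mul_natCast] at hsb' ⊢
  have hsb0 : sb ≠ 0 := ne_zero_pow two_ne_zero (hsb ▸ hb)
  have hpair := qPoch_mul_qPoch_neg_of_sq_eq (x := qReflect q n sb) (y := q * sb') q k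
    (by rw [mul_pow, hsb', qReflect, div_pow, mul_pow, hsb]; field_simp)
  have hb' : qReflect q n (q ^ (n + 1) * b) = ((q ^ n) ^ 2)⁻¹ / b := by
    rw [qReflect]; field_simp; ring
  have ha' : ∀ i, qReflect q n (q * b / a i) = q ^ (-(n : ℤ)) * a i / b := fun i => by
    rw [qReflect, zpow_neg, zpow_natCast]; field_simp [ha i]
  simp only [vwpDen, vwpNum, List.map_append, List.map_cons, List.map_nil, List.map_ofFn,
    List.prod_append, List.prod_cons, List.prod_nil, List.prod_ofFn, Function.comp_def,
    qReflect_neg, hb', ha']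
  linear_combination (qPoch (((q ^ n) ^ 2)⁻¹ / b) q k *
    ∏ i, qPoch (q ^ (-(n : ℤ)) * a i / b) q k) * hpair

theorem prod_map_qPoch_map_qReflect_vwpNum (hq : q ≠ 0) (hb : b ≠ 0) (ha : ∀ i, a i ≠ 0)
    (hsb : sb ^ 2 = b) (hsb' : sb' ^ 2 = q ^ (-2 * (n : ℤ)) / b) (k : ℕ) :
    (((vwpNum q b sb a).map (qReflect q n)).map fun x => qPoch x q k).prod
      = ((vwpDen n q (q ^ (-2 * (n : ℤ)) / b) sb' fun i => q ^ (-(n : ℤ)) * a i / b).map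
          fun x => qPoch x q k).prod := by
  rw [zpow_neg_two_mul_natCast] at hsb' ⊢
  have hsb0 : sb ≠ 0 := ne_zero_pow two_ne_zero (hsb ▸ hb)
  have hpair := qPoch_mul_qPoch_neg_of_sq_eq (x := qReflect q n (q * sb)) (y := sb') q k
    (by rw [hsb', qReflect, div_pow, mul_pow, mul_pow, hsb]; field_simp)
  have hb' : qReflect q n b = q ^ (n + 1) * (((q ^ n) ^ 2)⁻¹ / b) := by
    rw [qReflect]; field_simp; ring
  have ha' : ∀ i, qReflect q n (a i)
      = q * (((q ^ n) ^ 2)⁻¹ / b) / (q ^ (-(n : ℤ)) * a i / b) := fun i => by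
    rw [qReflect, zpow_neg, zpow_natCast]; field_simp [ha i]
  simp only [vwpDen, vwpNum, List.map_append, List.map_cons, List.map_nil, List.map_ofFn,
    List.prod_append, List.prod_cons, List.prod_nil, List.prod_ofFn, Function.comp_def,
    qReflect_neg, hb', ha']
  linear_combination (qPoch (q ^ (n + 1) * (((q ^ n) ^ 2)⁻¹ / b)) q k *
    ∏ i, qPoch (q * (((q ^ n) ^ 2)⁻¹ / b) / (q ^ (-(n : ℤ)) * a i / b)) q k) * hpair

theorem qPoch_qReflect_ne_zero_of_mem_vwpNum (hq : q ≠ 0) (hb : b ≠ 0) (ha : ∀ i, a i ≠ 0)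
    (hsb : sb ^ 2 = b) (hsb' : sb' ^ 2 = q ^ (-2 * (n : ℤ)) / b)
    (hden : ∀ x ∈ vwpDen n q (q ^ (-2 * (n : ℤ)) / b) sb'
      (fun i => q ^ (-(n : ℤ)) * a i / b), qPoch x q n ≠ 0) :
    ∀ x ∈ vwpNum q b sb a, qPoch (qReflect q n x) q n ≠ 0 := by
  have hprod : (((vwpNum q b sb a).map (qReflect q n)).map fun x => qPoch x q n).prod ≠ 0 := by
    rw [prod_map_qPoch_map_qReflect_vwpNum hq hb ha hsb hsb' n]
    exact List.prod_ne_zero (by simpa using hden)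
  exact fun x hx h0 =>
    hprod (List.prod_eq_zero (List.mem_map.2 ⟨_, List.mem_map_of_mem hx, h0⟩))

theorem pow_mul_prod_vwpDen_div_prod_vwpNum (hq : q ≠ 0) (hb : b ≠ 0) (ha : ∀ i, a i ≠ 0)
    (hsb : sb ^ 2 = b) (z : ℂ) :
    q ^ (n + 1) * (vwpDen n q b sb a).prod / (vwpNum q b sb a).prod / z
      = q ^ (2 * n + m) * b ^ m / ((∏ i, a i) ^ 2 * z) := by
  have hsb0 : sb ≠ 0 := ne_zero_pow two_ne_zero (hsb ▸ hb)
  have hA : ∏ i, a i ≠ 0 := prod_ne_zero_iff.2 fun i _ => ha i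
  simp only [vwpDen, vwpNum, List.prod_append, List.prod_cons, List.prod_nil, List.prod_ofFn,
    prod_div_distrib, prod_const, card_univ, Fintype.card_fin]
  rw [← hsb]
  field_simp
  ring

end VeryWellPoised

/-- `a` lists `a₅, …, a_{r+1}`; `sb` and `sb'` are the chosen square roots of `b` and
`q^{-2n}/b`. -/
theorem inversion_very_well_poised_general (n r : ℕ) (hr : 4 ≤ r) (q z b sb sb' : ℂ)
    (a : Fin (r - 3) → ℂ)
    (hq : q ≠ 0) (hz : z ≠ 0) (hb : b ≠ 0)
    (ha : ∀ i, a i ≠ 0)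
    (hsb : sb ^ 2 = b) (hsb' : sb' ^ 2 = q ^ (-2 * (n : ℤ)) / b)
    (hden : ∀ x ∈ ([q, sb, -sb, q ^ (n + 1) * b] ++
        (List.ofFn fun i => q * b / a i) ++
        [sb', -sb', q ^ (n + 1) * (q ^ (-2 * (n : ℤ)) / b)] ++
        (List.ofFn fun i => q * (q ^ (-2 * (n : ℤ)) / b) / (q ^ (-(n : ℤ)) * a i / b))),
      ∀ k ≤ n, qPoch x q k ≠ 0) :
    phi n ([b, q * sb, -(q * sb)] ++ List.ofFn a)
      ([sb, -sb, q ^ (n + 1) * b] ++ List.ofFn fun i => q * b / a i) q z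
    = q ^ (-(n.choose 2 : ℤ)) * (-z / q) ^ n *
        ((qPoch (q * sb) q n * qPoch (-(q * sb)) q n * qPoch b q n *
            ∏ i, qPoch (a i) q n) /
          (qPoch sb q n * qPoch (-sb) q n * qPoch (q ^ (n + 1) * b) q n *
            ∏ i, qPoch (q * b / a i) q n)) *
        phi n ([q ^ (-2 * (n : ℤ)) / b, q * sb', -(q * sb')] ++
            List.ofFn fun i => q ^ (-(n : ℤ)) * a i / b)
          ([sb', -sb', q ^ (n + 1) * (q ^ (-2 * (n : ℤ)) / b)] ++
            List.ofFn fun i => q * (q ^ (-2 * (n : ℤ)) / b) / (q ^ (-(n : ℤ)) * a i / b)) q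
          (q ^ (2 * (n : ℤ) + r - 3) * b ^ ((r : ℤ) - 3) / ((∏ i, a i) ^ 2 * z)) := by
  have hsb0 : sb ≠ 0 := ne_zero_pow two_ne_zero (hsb ▸ hb)
  have hdenL : ∀ x ∈ q :: vwpDen n q b sb a, qPoch x q n ≠ 0 := fun x hx =>
    hden x (List.mem_append_left _ (List.mem_append_left _ hx)) n le_rfl
  have hdenR : ∀ x ∈ vwpDen n q (q ^ (-2 * (n : ℤ)) / b) sb'
      (fun i => q ^ (-(n : ℤ)) * a i / b), qPoch x q n ≠ 0 := fun x hx =>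
    hden x (by simp only [vwpDen, List.mem_append] at hx ⊢; tauto) n le_rfl
  have harg : q ^ (2 * (n : ℤ) + r - 3) * b ^ ((r : ℤ) - 3) / ((∏ i, a i) ^ 2 * z)
      = q ^ (n + 1) * (vwpDen n q b sb a).prod / (vwpNum q b sb a).prod / z := by
    rw [pow_mul_prod_vwpDen_div_prod_vwpNum hq hb ha hsb,
      show 2 * (n : ℤ) + r - 3 = ((2 * n + (r - 3) : ℕ) : ℤ) by omega,
      show (r : ℤ) - 3 = ((r - 3 : ℕ) : ℤ) by omega, zpow_natCast, zpow_natCast]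
  rw [harg]
  refine (phi_eq_mul_phi_qReflect (as := vwpNum q b sb a) (bs := vwpDen n q b sb a) hq hz
    (by simp [vwpNum, vwpDen]) (by simp [vwpNum, hb, hq, hsb0, ha])
    (by simp [vwpDen, hb, hq, hsb0, ha]) hdenL
    (qPoch_qReflect_ne_zero_of_mem_vwpNum hq hb ha hsb hsb' hdenR)).trans ?_
  rw [phiTerm_top hq (hdenL q (by simp))]
  congr 1
  · simp only [vwpNum, vwpDen, List.map_append, List.map_cons, List.map_nil, List.map_ofFn,
      List.prod_append, List.prod_cons, List.prod_nil, List.prod_ofFn, Function.comp_def]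
    ring
  · exact phi_congr (prod_map_qPoch_map_qReflect_vwpDen hq hb ha hsb hsb')
      (prod_map_qPoch_map_qReflect_vwpNum hq hb ha hsb hsb') rfl

/-- Inversion of a terminating very-well-poised series `₍r+1₎W_r`.
Here `a : Fin (r-3) → ℂ` lists the parameters `a₅, …, a_{r+1}`, `sb` is the fixed
square root of `b`, and `sb'` the fixed square root of `q^{-2n}/b` used on the
right-hand side. -/
theorem inversion_very_well_poised (n r : ℕ) (hr : 4 ≤ r) (q z b sb sb' : ℂ)
    (a : Fin (r - 3) → ℂ)
    (hq : q ≠ 0) (hq1 : ‖q‖ ≠ 1) (hz : z ≠ 0) (hb : b ≠ 0)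
    (ha : ∀ i, a i ≠ 0)
    (hsb : sb ^ 2 = b) (hsb' : sb' ^ 2 = q ^ (-2 * (n : ℤ)) / b)
    (hden : ∀ x ∈ ([q, sb, -sb, q ^ (n + 1) * b] ++
        (List.ofFn fun i => q * b / a i) ++
        [sb', -sb', q ^ (n + 1) * (q ^ (-2 * (n : ℤ)) / b)] ++
        (List.ofFn fun i => q * (q ^ (-2 * (n : ℤ)) / b) / (q ^ (-(n : ℤ)) * a i / b))),
      ∀ k ≤ n, qPoch x q k ≠ 0) :
    phi n ([b, q * sb, -(q * sb)] ++ List.ofFn a)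
      ([sb, -sb, q ^ (n + 1) * b] ++ List.ofFn fun i => q * b / a i) q z
    = q ^ (-(n.choose 2 : ℤ)) * (-z / q) ^ n *
        ((qPoch (q * sb) q n * qPoch (-(q * sb)) q n * qPoch b q n *
            ∏ i, qPoch (a i) q n) /
          (qPoch sb q n * qPoch (-sb) q n * qPoch (q ^ (n + 1) * b) q n *
            ∏ i, qPoch (q * b / a i) q n)) *
        phi n ([q ^ (-2 * (n : ℤ)) / b, q * sb', -(q * sb')] ++
            List.ofFn fun i => q ^ (-(n : ℤ)) * a i / b)
          ([sb', -sb', q ^ (n + 1) * (q ^ (-2 * (n : ℤ)) / b)] ++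
            List.ofFn fun i => q * (q ^ (-2 * (n : ℤ)) / b) / (q ^ (-(n : ℤ)) * a i / b)) q
          (q ^ (2 * (n : ℤ) + r - 3) * b ^ ((r : ℤ) - 3) / ((∏ i, a i) ^ 2 * z)) :=
  inversion_very_well_poised_general n r hr q z b sb sb' a hq hz hb ha hsb hsb' hden
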